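/- arXiv:1612.08829 — 3 statements merged into one kernel-verified Lean document; each statement's English description precedes it below -/
import Mathlib

section
/- Let A, C : ℝ → ℝ be continuously differentiable with A, C ≥ 0 on [0,1]. Let N ≥ 1 and let A_N be the (N+1)×(N+1) tridiagonal matrix with entries (A_N)_{k,k-1} = N·A((k−1)/N), (A_N)_{k,k} = −N·(A(k/N)+C(k/N)), (A_N)_{k,k+1} = N·C((k+1)/N) (with the convention that the A-terms vanish for k = 0 and the C-terms vanish for k = N). Then for any d₁ > ‖A'‖_∞ + ‖C'‖_∞ (sup norms over [0,1]) and any vector v ∈ ℂ^{N+1}, if k is an index with |v_k| = ‖v‖_∞ > 0, then Re( ((A_N − d₁ I) v)_k · conj(v_k)/|v_k| ) < 0. -/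
/-! At an index `k` where `‖v k‖` is maximal, the off-diagonal entries of row `k` of `A_N` are
nonnegative reals, so `Re ((A_N v)_k · conj v_k) ≤ (Σ_l (A_N)_{kl}) ‖v_k‖²`. The row sum is
`N (A((k-1)/N) - A(k/N)) + N (C((k+1)/N) - C(k/N))` (a term dropping out at the boundary), two
difference quotients which the mean value theorem bounds by `‖A'‖_∞ + ‖C'‖_∞ < d₁`. -/

open scoped Matrix

/-- The tridiagonal transition-rate matrix of the one-step process with
density-dependent rates, with the convention that the `A`-terms vanish in
row `k = 0` and the `C`-terms vanish in row `k = N`. -/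
noncomputable def triMat (A C : ℝ → ℝ) (N : ℕ) :
    Matrix (Fin (N + 1)) (Fin (N + 1)) ℂ := fun k l =>
  if (l : ℕ) + 1 = (k : ℕ) then
    (((N : ℝ) * A ((((k : ℕ) - 1 : ℕ) : ℝ) / N) : ℝ) : ℂ)
  else if l = k then
    ((-( (N : ℝ) * ((if (k : ℕ) = 0 then 0 else A ((k : ℕ) / N))
        + (if (k : ℕ) = N then 0 else C ((k : ℕ) / N)))) : ℝ) : ℂ)
  else if (k : ℕ) + 1 = (l : ℕ) then
    (((N : ℝ) * C (((k : ℕ) + 1 : ℝ) / N) : ℝ) : ℂ)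
  else 0

open scoped ComplexConjugate

noncomputable def supAbsDeriv (f : ℝ → ℝ) (a b : ℝ) : ℝ :=
  sSup ((fun x => |deriv f x|) '' Set.Icc a b)

section supAbsDeriv

variable {f : ℝ → ℝ} {a b : ℝ}

lemma bddAbove_abs_deriv_image_Icc (hf : ContDiff ℝ 1 f) :
    BddAbove ((fun x => |deriv f x|) '' Set.Icc a b) :=
  (isCompact_Icc.image (continuous_abs.comp (hf.continuous_deriv le_rfl))).bddAbove

lemma abs_deriv_le_supAbsDeriv (hf : ContDiff ℝ 1 f) {x : ℝ} (hx : x ∈ Set.Icc a b) :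
    |deriv f x| ≤ supAbsDeriv f a b :=
  le_csSup (bddAbove_abs_deriv_image_Icc hf) ⟨x, hx, rfl⟩

lemma supAbsDeriv_nonneg (hf : ContDiff ℝ 1 f) (hab : a ≤ b) : 0 ≤ supAbsDeriv f a b :=
  (abs_nonneg _).trans (abs_deriv_le_supAbsDeriv hf (Set.left_mem_Icc.mpr hab))

lemma abs_sub_le_supAbsDeriv_mul (hf : ContDiff ℝ 1 f) {x y : ℝ} (hx : x ∈ Set.Icc a b)
    (hy : y ∈ Set.Icc a b) : |f y - f x| ≤ supAbsDeriv f a b * |y - x| :=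
  (convex_Icc a b).norm_image_sub_le_of_norm_deriv_le
    (fun t _ => hf.differentiable one_ne_zero t) (fun _ ht => abs_deriv_le_supAbsDeriv hf ht) hx hy

lemma natCast_div_mem_Icc {i N : ℕ} (h : i ≤ N) : (i : ℝ) / N ∈ Set.Icc (0 : ℝ) 1 :=
  ⟨by positivity, div_le_one_of_le₀ (by exact_mod_cast h) N.cast_nonneg⟩

lemma natCast_mul_sub_le_supAbsDeriv_mul (hf : ContDiff ℝ 1 f) {N i j : ℕ} (hi : i ≤ N)
    (hj : j ≤ N) : (N : ℝ) * (f (i / N) - f (j / N)) ≤ supAbsDeriv f 0 1 * |(i : ℝ) - j| := by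
  rcases N.eq_zero_or_pos with rfl | hN
  · simpa using mul_nonneg (supAbsDeriv_nonneg hf zero_le_one) (abs_nonneg ((i : ℝ) - j))
  have hN' : (0 : ℝ) < N := by exact_mod_cast hN
  calc (N : ℝ) * (f (i / N) - f (j / N))
      ≤ N * (supAbsDeriv f 0 1 * |(i : ℝ) / N - j / N|) :=
        mul_le_mul_of_nonneg_left ((le_abs_self _).trans <| abs_sub_le_supAbsDeriv_mul hf
          (natCast_div_mem_Icc hj) (natCast_div_mem_Icc hi)) hN'.le
    _ = supAbsDeriv f 0 1 * |(i : ℝ) - j| := by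
        rw [← sub_div, abs_div, abs_of_pos hN']
        field_simp

end supAbsDeriv

lemma Fin.sum_ite_val_add_one_eq {M : Type*} [AddCommMonoid M] (n m : ℕ) (x : M) :
    ∑ l : Fin n, (if (l : ℕ) + 1 = m then x else 0) = if 1 ≤ m ∧ m ≤ n then x else 0 := by
  rw [Fin.sum_univ_eq_sum_range (fun i => if i + 1 = m then x else 0)]
  rcases m with _ | m
  · simp
  · simp [Finset.sum_ite_eq']

lemma Fin.sum_ite_eq_val {M : Type*} [AddCommMonoid M] (n m : ℕ) (x : M) :
    ∑ l : Fin n, (if m = (l : ℕ) then x else 0) = if m < n then x else 0 := by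
  rw [Fin.sum_univ_eq_sum_range (fun i => if m = i then x else 0), Finset.sum_ite_eq]
  simp

section Dissipativity

variable {n : Type*} [Fintype n] {M : Matrix n n ℂ} {v : n → ℂ} {k : n}

lemma re_mulVec_mul_conj_le_sum_re_mul_sq (hreal : ∀ l, (M k l).im = 0)
    (hoff : ∀ l, l ≠ k → 0 ≤ (M k l).re) (hk : ∀ l, ‖v l‖ ≤ ‖v k‖) :
    ((M *ᵥ v) k * conj (v k)).re ≤ (∑ l, (M k l).re) * ‖v k‖ ^ 2 := by
  have hterm : ∀ l, (M k l * (v l * conj (v k))).re ≤ (M k l).re * ‖v k‖ ^ 2 := by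
    intro l
    rw [Complex.mul_re, hreal l, zero_mul, sub_zero]
    rcases eq_or_ne l k with rfl | hlk
    · rw [Complex.mul_conj', ← Complex.ofReal_pow, Complex.ofReal_re]
    · refine mul_le_mul_of_nonneg_left ?_ (hoff l hlk)
      calc (v l * conj (v k)).re ≤ ‖v l * conj (v k)‖ := Complex.re_le_norm _
        _ = ‖v l‖ * ‖v k‖ := by rw [norm_mul, Complex.norm_conj]
        _ ≤ ‖v k‖ ^ 2 := by rw [sq]; exact mul_le_mul_of_nonneg_right (hk l) (norm_nonneg _)
  rw [Matrix.mulVec, dotProduct, Finset.sum_mul, Complex.re_sum, Finset.sum_mul]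
  exact Finset.sum_le_sum fun l _ => by rw [mul_assoc]; exact hterm l

theorem re_sub_smul_mulVec_mul_conj_div_norm_neg (hreal : ∀ l, (M k l).im = 0)
    (hoff : ∀ l, l ≠ k → 0 ≤ (M k l).re) (hk : ∀ l, ‖v l‖ ≤ ‖v k‖) (hpos : 0 < ‖v k‖)
    {d : ℝ} (hd : ∑ l, (M k l).re < d) :
    ((M *ᵥ v - d • v) k * conj (v k) / (‖v k‖ : ℂ)).re < 0 := by
  have hbound := re_mulVec_mul_conj_le_sum_re_mul_sq hreal hoff hk
  rw [Complex.div_ofReal_re, Pi.sub_apply, Pi.smul_apply, sub_mul, Complex.sub_re,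
    Complex.real_smul, mul_assoc, Complex.re_ofReal_mul, Complex.mul_conj', ← Complex.ofReal_pow,
    Complex.ofReal_re]
  refine div_neg_of_neg_of_pos ?_ hpos
  nlinarith [pow_pos hpos 2]

end Dissipativity

section triMat

variable {A C : ℝ → ℝ} {N : ℕ}

lemma triMat_im (k l : Fin (N + 1)) : (triMat A C N k l).im = 0 := by
  unfold triMat
  split_ifs <;> simp

lemma triMat_re_nonneg_of_ne (hA0 : ∀ x ∈ Set.Icc (0 : ℝ) 1, 0 ≤ A x)
    (hC0 : ∀ x ∈ Set.Icc (0 : ℝ) 1, 0 ≤ C x) {k l : Fin (N + 1)} (hlk : l ≠ k) :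
    0 ≤ (triMat A C N k l).re := by
  have hk := k.is_le
  have hl := l.is_le
  unfold triMat
  split_ifs
  · simpa using mul_nonneg N.cast_nonneg (hA0 _ (natCast_div_mem_Icc (by omega)))
  · simpa using mul_nonneg N.cast_nonneg
      (by simpa using hC0 _ (natCast_div_mem_Icc (i := k + 1) (by omega)))
  · simp

lemma sum_triMat_re (k : Fin (N + 1)) :
    ∑ l, (triMat A C N k l).re =
      (if (k : ℕ) = 0 then 0 else N * (A (((k - 1 : ℕ) : ℝ) / N) - A (k / N)))
      + (if (k : ℕ) = N then 0 else N * (C ((k + 1) / N) - C (k / N))) := by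
  have hrow : ∀ l : Fin (N + 1), (triMat A C N k l).re =
      (if (l : ℕ) + 1 = k then N * A (((k - 1 : ℕ) : ℝ) / N) else 0)
      + (if k = l then -(N * ((if (k : ℕ) = 0 then 0 else A (k / N))
          + (if (k : ℕ) = N then 0 else C (k / N)))) else 0)
      + (if (k : ℕ) + 1 = l then N * C ((k + 1) / N) else 0) := by
    intro l
    unfold triMat
    simp only [Fin.ext_iff]
    split_ifs <;> first | omega | simp
  simp only [hrow, Finset.sum_add_distrib, Fin.sum_ite_val_add_one_eq, Finset.sum_ite_eq,
    Finset.mem_univ, if_true, Fin.sum_ite_eq_val]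
  have hk := k.is_le
  split_ifs <;> first | omega | ring

lemma sum_triMat_re_le (hA : ContDiff ℝ 1 A) (hC : ContDiff ℝ 1 C) (k : Fin (N + 1)) :
    ∑ l, (triMat A C N k l).re ≤ supAbsDeriv A 0 1 + supAbsDeriv C 0 1 := by
  have hk := k.is_le
  have hA_step : (if (k : ℕ) = 0 then 0 else N * (A (((k - 1 : ℕ) : ℝ) / N) - A (k / N)))
      ≤ supAbsDeriv A 0 1 := by
    split_ifs with hk0
    · exact supAbsDeriv_nonneg hA zero_le_one
    · simpa [Nat.cast_sub (Nat.one_le_iff_ne_zero.mpr hk0)] using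
        natCast_mul_sub_le_supAbsDeriv_mul hA (i := k - 1) (j := k) (by omega) hk
  have hC_step : (if (k : ℕ) = N then 0 else N * (C ((k + 1) / N) - C (k / N)))
      ≤ supAbsDeriv C 0 1 := by
    split_ifs with hkN
    · exact supAbsDeriv_nonneg hC zero_le_one
    · simpa using
        natCast_mul_sub_le_supAbsDeriv_mul hC (i := k + 1) (j := k) (by omega) hk
  rw [sum_triMat_re]
  exact add_le_add hA_step hC_step

end triMat

theorem stmt_1_general (A C : ℝ → ℝ) (hA : ContDiff ℝ 1 A) (hC : ContDiff ℝ 1 C)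
    (hA0 : ∀ x ∈ Set.Icc (0 : ℝ) 1, 0 ≤ A x)
    (hC0 : ∀ x ∈ Set.Icc (0 : ℝ) 1, 0 ≤ C x)
    (N : ℕ) (d₁ : ℝ)
    (hd : sSup ((fun x => |deriv A x|) '' Set.Icc (0 : ℝ) 1)
        + sSup ((fun x => |deriv C x|) '' Set.Icc (0 : ℝ) 1) < d₁)
    (v : Fin (N + 1) → ℂ) (k : Fin (N + 1))
    (hk : ∀ j, ‖v j‖ ≤ ‖v k‖)
    (hpos : 0 < ‖v k‖) :
    ((((triMat A C N).mulVec v - d₁ • v) k * (starRingEnd ℂ) (v k)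
      / (‖v k‖ : ℂ)).re) < 0 :=
  re_sub_smul_mulVec_mul_conj_div_norm_neg (triMat_im k) (fun _ => triMat_re_nonneg_of_ne hA0 hC0)
    hk hpos ((sum_triMat_re_le hA hC k).trans_lt hd)

/-- dissipativity of `A_N - d₁ I` in the maximum norm. -/
theorem stmt_1 (A C : ℝ → ℝ) (hA : ContDiff ℝ 1 A) (hC : ContDiff ℝ 1 C)
    (hA0 : ∀ x ∈ Set.Icc (0 : ℝ) 1, 0 ≤ A x)
    (hC0 : ∀ x ∈ Set.Icc (0 : ℝ) 1, 0 ≤ C x)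
    (N : ℕ) (hN : 1 ≤ N) (d₁ : ℝ)
    (hd : sSup ((fun x => |deriv A x|) '' Set.Icc (0 : ℝ) 1)
        + sSup ((fun x => |deriv C x|) '' Set.Icc (0 : ℝ) 1) < d₁)
    (v : Fin (N + 1) → ℂ) (k : Fin (N + 1))
    (hk : ∀ j, ‖v j‖ ≤ ‖v k‖)
    (hpos : 0 < ‖v k‖) :
    ((((triMat A C N).mulVec v - d₁ • v) k * (starRingEnd ℂ) (v k)
      / (‖v k‖ : ℂ)).re) < 0 :=
  stmt_1_general A C hA hC hA0 hC0 N d₁ hd v k hk hpos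
end

section
/- Let A, C : ℝ → ℝ be continuously differentiable with A, C ≥ 0 on [0,1], let A_N be the tridiagonal matrix as above, and let d₁ > ‖A'‖_∞ + ‖C'‖_∞. Then for all t ≥ 0, the operator norm of e^{−d₁t} exp(t A_N) with respect to the maximum norm on ℂ^{N+1} is at most 1. -/
open scoped Matrix

lemma my_norm_exp_le {𝔸 : Type*} [NormedRing 𝔸] [NormedAlgebra ℂ 𝔸] [CompleteSpace 𝔸]
    [NormOneClass 𝔸] (x : 𝔸) : ‖NormedSpace.exp x‖ ≤ Real.exp ‖x‖ := by
  rw [NormedSpace.exp_eq_tsum ℂ]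
  refine (norm_tsum_le_tsum_norm (NormedSpace.norm_expSeries_summable' (𝕂 := ℂ) x)).trans ?_
  have hsum : Summable fun n : ℕ => ‖x‖ ^ n / n.factorial :=
    Real.summable_pow_div_factorial ‖x‖
  have hle : ∀ n : ℕ, ‖((n.factorial : ℂ))⁻¹ • x ^ n‖ ≤ ‖x‖ ^ n / n.factorial := by
    intro n
    rw [norm_smul, norm_inv]
    have h1 : ‖((n.factorial : ℂ))‖ = (n.factorial : ℝ) := by simp
    rw [h1, div_eq_inv_mul]
    have h2 : (0:ℝ) ≤ ((n.factorial : ℝ))⁻¹ := by positivity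
    exact mul_le_mul_of_nonneg_left (norm_pow_le x n) h2
  refine (Summable.tsum_le_tsum hle (NormedSpace.norm_expSeries_summable' (𝕂 := ℂ) x) hsum).trans_eq ?_
  rw [Real.exp_eq_exp_ℝ, NormedSpace.exp_eq_tsum ℝ]
  congr 1
  funext n
  rw [smul_eq_mul, div_eq_inv_mul]

lemma my_bddAbove {f : ℝ → ℝ} (hf : ContDiff ℝ 1 f) :
    BddAbove ((fun x => |deriv f x|) '' Set.Icc (0:ℝ) 1) :=
  (isCompact_Icc.image ((hf.continuous_deriv le_rfl).abs)).bddAbove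

lemma my_sSup_nonneg {f : ℝ → ℝ} (hf : ContDiff ℝ 1 f) :
    0 ≤ sSup ((fun x => |deriv f x|) '' Set.Icc (0:ℝ) 1) :=
  le_trans (abs_nonneg (deriv f 0))
    (le_csSup (my_bddAbove hf) ⟨0, Set.left_mem_Icc.mpr zero_le_one, rfl⟩)

lemma my_lip {f : ℝ → ℝ} (hf : ContDiff ℝ 1 f) {x y : ℝ}
    (hx : x ∈ Set.Icc (0:ℝ) 1) (hy : y ∈ Set.Icc (0:ℝ) 1) :
    |f x - f y| ≤ sSup ((fun x => |deriv f x|) '' Set.Icc (0:ℝ) 1) * |x - y| := by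
  have hK : ∀ z ∈ Set.Icc (0:ℝ) 1, ‖deriv f z‖ ≤
      sSup ((fun x => |deriv f x|) '' Set.Icc (0:ℝ) 1) := fun z hz => by
    rw [Real.norm_eq_abs]; exact le_csSup (my_bddAbove hf) ⟨z, hz, rfl⟩
  have := (convex_Icc (0:ℝ) 1).norm_image_sub_le_of_norm_deriv_le
    (fun z _ => (hf.differentiable one_ne_zero).differentiableAt) hK hy hx
  simpa [Real.norm_eq_abs] using this

/-- the rescaled semigroup `e^{-d₁ t} exp(t A_N)` is a
contraction with respect to the maximum norm on `ℂ^{N+1}`. -/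
theorem stmt_2 (A C : ℝ → ℝ) (hA : ContDiff ℝ 1 A) (hC : ContDiff ℝ 1 C)
    (hA0 : ∀ x ∈ Set.Icc (0 : ℝ) 1, 0 ≤ A x)
    (hC0 : ∀ x ∈ Set.Icc (0 : ℝ) 1, 0 ≤ C x)
    (N : ℕ) (hN : 1 ≤ N) (d₁ : ℝ)
    (hd : sSup ((fun x => |deriv A x|) '' Set.Icc (0 : ℝ) 1)
        + sSup ((fun x => |deriv C x|) '' Set.Icc (0 : ℝ) 1) < d₁) :
    ∀ t : ℝ, 0 ≤ t → ∀ v : Fin (N + 1) → ℂ,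
      ‖Real.exp (-d₁ * t) • (NormedSpace.exp (t • triMat A C N)).mulVec v‖
        ≤ ‖v‖ := by
  intro t ht v
  classical
  have hN0 : (0:ℝ) < (N:ℝ) := by exact_mod_cast Nat.pos_of_ne_zero (by omega)
  have hmem : ∀ j : ℕ, j ≤ N → ((j:ℝ)/N) ∈ Set.Icc (0:ℝ) 1 := by
    intro j hj
    constructor
    · positivity
    · rw [div_le_one hN0]; exact_mod_cast hj
  set KA := sSup ((fun x => |deriv A x|) '' Set.Icc (0 : ℝ) 1) with hKA
  set KC := sSup ((fun x => |deriv C x|) '' Set.Icc (0 : ℝ) 1) with hKC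
  have hKA0 : 0 ≤ KA := my_sSup_nonneg hA
  have hKC0 : 0 ≤ KC := my_sSup_nonneg hC
  have hd₁ : 0 < d₁ := lt_of_le_of_lt (add_nonneg hKA0 hKC0) hd
  set S : ℝ := ∑ j : Fin (N+1), (A ((j:ℕ)/N) + C ((j:ℕ)/N)) with hS
  have hS0 : 0 ≤ S := Finset.sum_nonneg fun j _ =>
    add_nonneg (hA0 _ (hmem _ (Nat.lt_succ_iff.mp j.isLt)))
      (hC0 _ (hmem _ (Nat.lt_succ_iff.mp j.isLt)))
  set c : ℝ := d₁ + (N:ℝ) * S with hc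
  have hc0 : (0:ℝ) ≤ c := by
    have : (0:ℝ) ≤ (N:ℝ) * S := mul_nonneg hN0.le hS0
    rw [hc]; linarith
  set M := triMat A C N with hM
  set P : Matrix (Fin (N+1)) (Fin (N+1)) ℂ := M + ((c - d₁ : ℝ) : ℂ) • 1 with hP
  have hrow : ∀ k, (∑ l, ‖P k l‖) ≤ c := by
    intro k
    have hk : (k:ℕ) ≤ N := Nat.lt_succ_iff.mp k.isLt
    set a : ℝ := if (k:ℕ) = 0 then 0 else (N:ℝ) * A ((((k:ℕ)-1:ℕ):ℝ)/N) with ha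
    set bA : ℝ := if (k:ℕ) = 0 then 0 else A ((k:ℕ)/N) with hbA
    set bC : ℝ := if (k:ℕ) = N then 0 else C ((k:ℕ)/N) with hbC
    set dd : ℝ := if (k:ℕ) = N then 0 else (N:ℝ) * C (((k:ℕ)+1:ℝ)/N) with hdd
    have hcast1 : (((k:ℕ)+1:ℕ):ℝ) = ((k:ℕ):ℝ) + 1 := by push_cast; ring
    have ha0 : 0 ≤ a := by
      rw [ha]; split_ifs with h
      · exact le_rfl
      · exact mul_nonneg hN0.le (hA0 _ (hmem _ (by omega)))
    have hbA0 : 0 ≤ bA := by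
      rw [hbA]; split_ifs with h
      · exact le_rfl
      · exact hA0 _ (hmem _ hk)
    have hbC0 : 0 ≤ bC := by
      rw [hbC]; split_ifs with h
      · exact le_rfl
      · exact hC0 _ (hmem _ hk)
    have hdd0 : 0 ≤ dd := by
      rw [hdd]; split_ifs with h
      · exact le_rfl
      · refine mul_nonneg hN0.le (hC0 _ ?_)
        rw [← hcast1]; exact hmem _ (by omega)
    have hbS : (N:ℝ) * (bA + bC) ≤ c - d₁ := by
      have h1 : bA ≤ A ((k:ℕ)/N) := by
        rw [hbA]; split_ifs with h
        · exact hA0 _ (hmem _ hk)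
        · exact le_rfl
      have h2 : bC ≤ C ((k:ℕ)/N) := by
        rw [hbC]; split_ifs with h
        · exact hC0 _ (hmem _ hk)
        · exact le_rfl
      have h3 : A ((k:ℕ)/N) + C ((k:ℕ)/N) ≤ S := by
        rw [hS]
        exact Finset.single_le_sum
          (f := fun j : Fin (N+1) => A ((j:ℕ)/N) + C ((j:ℕ)/N))
          (fun j _ => add_nonneg (hA0 _ (hmem _ (Nat.lt_succ_iff.mp j.isLt)))
            (hC0 _ (hmem _ (Nat.lt_succ_iff.mp j.isLt)))) (Finset.mem_univ k)
      have h4 := mul_le_mul_of_nonneg_left (add_le_add h1 h2) hN0.le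
      have h5 := mul_le_mul_of_nonneg_left h3 hN0.le
      rw [hc]; linarith
    set ee : ℝ := c - d₁ - (N:ℝ)*(bA+bC) with hee
    have hee0 : 0 ≤ ee := by rw [hee]; linarith
    have hPentry : ∀ l : Fin (N+1), ‖P k l‖ =
        (if (l:ℕ)+1 = (k:ℕ) then a else 0) + (if l = k then ee else 0)
          + (if (k:ℕ)+1 = (l:ℕ) then dd else 0) := by
      intro l
      have hPl : P k l = triMat A C N k l + ((c - d₁:ℝ):ℂ) * (if k = l then 1 else 0) := by
        rw [hP, hM]
        simp [Matrix.add_apply, Matrix.one_apply]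
      by_cases h1 : (l:ℕ)+1 = (k:ℕ)
      · have hkl : ¬ (k = l) := fun h => by rw [h] at h1; omega
        have hlk : ¬ (l = k) := fun h => hkl h.symm
        have hk0 : ¬ ((k:ℕ) = 0) := by omega
        have hkk1 : ¬ ((k:ℕ)+1 = (l:ℕ)) := by omega
        rw [hPl, triMat, if_pos h1, if_neg hkl, if_pos h1, if_neg hlk, if_neg hkk1,
          ha, if_neg hk0]
        rw [mul_zero, add_zero, Complex.norm_real, Real.norm_eq_abs,
          abs_of_nonneg (mul_nonneg hN0.le (hA0 _ (hmem _ (by omega))))]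
        simp
      · by_cases h2 : l = k
        · subst h2
          have hc1 : ¬ ((l:ℕ)+1 = (l:ℕ)) := by omega
          rw [hPl, triMat, if_neg hc1, if_pos rfl, if_pos rfl, if_neg h1, if_neg hc1]
          rw [mul_one, ← Complex.ofReal_add, Complex.norm_real, Real.norm_eq_abs]
          have : -((N:ℝ) * ((if (l:ℕ) = 0 then 0 else A ((l:ℕ)/N))
              + (if (l:ℕ) = N then 0 else C ((l:ℕ)/N)))) + (c - d₁) = ee := by
            rw [hee, hbA, hbC]; ring
          rw [this, abs_of_nonneg hee0]
          simp
        · by_cases h3 : (k:ℕ)+1 = (l:ℕ)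
          · have hkN : ¬ ((k:ℕ) = N) := by omega
            have hkl : ¬ (k = l) := fun h => h2 h.symm
            rw [hPl, triMat, if_neg h1, if_neg h2, if_pos h3, if_neg hkl]
            rw [mul_zero, add_zero, Complex.norm_real, Real.norm_eq_abs]
            have hnn : (0:ℝ) ≤ (N:ℝ) * C (((k:ℕ)+1:ℝ)/N) := by
              refine mul_nonneg hN0.le (hC0 _ ?_)
              rw [show ((k:ℕ)+1:ℝ) = (((k:ℕ)+1:ℕ):ℝ) from hcast1.symm]
              exact hmem _ (by omega)
            rw [abs_of_nonneg hnn]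
            simp [h1, h2, h3, hdd, hkN]
          · have hkl : ¬ (k = l) := fun h => h2 h.symm
            rw [hPl, triMat, if_neg h1, if_neg h2, if_neg h3, if_neg hkl]
            rw [mul_zero, add_zero, norm_zero, if_neg h1, if_neg h2, if_neg h3]
            simp
    have hsum : (∑ l, ‖P k l‖) = a + ee + dd := by
      rw [Finset.sum_congr rfl fun l _ => hPentry l, Finset.sum_add_distrib,
        Finset.sum_add_distrib]
      have hS2 : (∑ l : Fin (N+1), if l = k then ee else 0) = ee := by
        simp
      have hS1 : (∑ l : Fin (N+1), if (l:ℕ)+1 = (k:ℕ) then a else 0) = a := by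
        by_cases hk0 : (k:ℕ) = 0
        · rw [Finset.sum_eq_zero fun l _ => if_neg (by omega), ha, if_pos hk0]
        · have hk' : (k:ℕ)-1 < N+1 := by omega
          rw [Finset.sum_eq_single (⟨(k:ℕ)-1, hk'⟩ : Fin (N+1))]
          · exact if_pos (by simp; omega)
          · intro l _ hl
            exact if_neg fun h => hl (Fin.ext (by simp; omega))
          · exact fun h => absurd (Finset.mem_univ _) h
      have hS3 : (∑ l : Fin (N+1), if (k:ℕ)+1 = (l:ℕ) then dd else 0) = dd := by
        by_cases hkN : (k:ℕ) = N
        · rw [Finset.sum_eq_zero fun l _ => if_neg (by omega), hdd, if_pos hkN]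
        · have hk' : (k:ℕ)+1 < N+1 := by omega
          rw [Finset.sum_eq_single (⟨(k:ℕ)+1, hk'⟩ : Fin (N+1))]
          · exact if_pos (by simp)
          · intro l _ hl
            exact if_neg fun h => hl (Fin.ext (by simp; omega))
          · exact fun h => absurd (Finset.mem_univ _) h
      rw [hS1, hS2, hS3]
    rw [hsum]
    have hAdiff : a - (N:ℝ)*bA ≤ KA := by
      by_cases hk0 : (k:ℕ) = 0
      · rw [ha, hbA, if_pos hk0, if_pos hk0]; simpa using hKA0
      · rw [ha, hbA, if_neg hk0, if_neg hk0]
        have hx := hmem ((k:ℕ)-1) (by omega)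
        have hy := hmem (k:ℕ) hk
        have hlip := my_lip hA hx hy
        rw [← hKA] at hlip
        have hcast : (((k:ℕ)-1:ℕ):ℝ) = ((k:ℕ):ℝ) - 1 := by
          push_cast [Nat.cast_sub (by omega : 1 ≤ (k:ℕ))]; ring
        have hxy : |(((k:ℕ)-1:ℕ):ℝ)/N - ((k:ℕ):ℝ)/N| = 1/(N:ℝ) := by
          rw [hcast, div_sub_div_same, show ((k:ℕ):ℝ) - 1 - ((k:ℕ):ℝ) = -1 by ring,
            abs_div, abs_neg, abs_one, abs_of_pos hN0]
        rw [hxy] at hlip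
        have h5 : A ((((k:ℕ)-1:ℕ):ℝ)/N) - A (((k:ℕ):ℝ)/N) ≤ KA * (1/(N:ℝ)) :=
          le_trans (le_abs_self _) hlip
        have h6 := mul_le_mul_of_nonneg_left h5 hN0.le
        have h7 : (N:ℝ) * (KA * (1/(N:ℝ))) = KA := by field_simp
        calc (N:ℝ) * A ((((k:ℕ)-1:ℕ):ℝ)/N) - (N:ℝ) * A (((k:ℕ):ℝ)/N)
            = (N:ℝ) * (A ((((k:ℕ)-1:ℕ):ℝ)/N) - A (((k:ℕ):ℝ)/N)) := by ring
          _ ≤ (N:ℝ) * (KA * (1/(N:ℝ))) := h6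
          _ = KA := h7
    have hCdiff : dd - (N:ℝ)*bC ≤ KC := by
      by_cases hkN : (k:ℕ) = N
      · rw [hdd, hbC, if_pos hkN, if_pos hkN]; simpa using hKC0
      · rw [hdd, hbC, if_neg hkN, if_neg hkN]
        have hx : (((k:ℕ)+1:ℝ))/N ∈ Set.Icc (0:ℝ) 1 := by
          rw [show ((k:ℕ)+1:ℝ) = (((k:ℕ)+1:ℕ):ℝ) from hcast1.symm]
          exact hmem _ (by omega)
        have hy := hmem (k:ℕ) hk
        have hlip := my_lip hC hx hy
        rw [← hKC] at hlip
        have hxy : |(((k:ℕ):ℝ)+1)/N - ((k:ℕ):ℝ)/N| = 1/(N:ℝ) := by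
          rw [div_sub_div_same, show ((k:ℕ):ℝ) + 1 - ((k:ℕ):ℝ) = 1 by ring,
            abs_div, abs_one, abs_of_pos hN0]
        rw [hxy] at hlip
        have h5 : C ((((k:ℕ):ℝ)+1)/N) - C (((k:ℕ):ℝ)/N) ≤ KC * (1/(N:ℝ)) :=
          le_trans (le_abs_self _) hlip
        have h6 := mul_le_mul_of_nonneg_left h5 hN0.le
        have h7 : (N:ℝ) * (KC * (1/(N:ℝ))) = KC := by field_simp
        calc (N:ℝ) * C ((((k:ℕ):ℝ)+1)/N) - (N:ℝ) * C (((k:ℕ):ℝ)/N)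
            = (N:ℝ) * (C ((((k:ℕ):ℝ)+1)/N) - C (((k:ℕ):ℝ)/N)) := by ring
          _ ≤ (N:ℝ) * (KC * (1/(N:ℝ))) := h6
          _ = KC := h7
    have hexp : (N:ℝ)*(bA+bC) = (N:ℝ)*bA + (N:ℝ)*bC := by ring
    rw [hee]
    linarith [hd.le]
  letI : SeminormedRing (Matrix (Fin (N+1)) (Fin (N+1)) ℂ) := Matrix.linftyOpSemiNormedRing
  letI : NormedRing (Matrix (Fin (N+1)) (Fin (N+1)) ℂ) := Matrix.linftyOpNormedRing
  letI : NormedAlgebra ℂ (Matrix (Fin (N+1)) (Fin (N+1)) ℂ) := Matrix.linftyOpNormedAlgebra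
  haveI : CompleteSpace (Matrix (Fin (N+1)) (Fin (N+1)) ℂ) := FiniteDimensional.complete ℂ _
  have hPnorm : ‖P‖ ≤ c := by
    rw [Matrix.linfty_opNorm_def]
    have key : ∀ i : Fin (N+1), (∑ j, ‖P i j‖₊ : NNReal) ≤ c.toNNReal := by
      intro i
      rw [← NNReal.coe_le_coe, NNReal.coe_sum, Real.coe_toNNReal _ hc0]
      simpa [coe_nnnorm] using hrow i
    calc ((Finset.univ.sup fun i => ∑ j, ‖P i j‖₊ : NNReal) : ℝ)
        ≤ (c.toNNReal : ℝ) := by exact_mod_cast Finset.sup_le fun i _ => key i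
      _ = c := Real.coe_toNNReal _ hc0
  have hsmulR : ∀ (r : ℝ) (X : Matrix (Fin (N+1)) (Fin (N+1)) ℂ), r • X = ((r:ℂ)) • X := by
    intro r X; rw [← algebraMap_smul ℂ r X, Complex.coe_algebraMap]
  have hdecomp : t • M = t • P
      + ((-(t*(c - d₁)) : ℝ) : ℂ) • (1 : Matrix (Fin (N+1)) (Fin (N+1)) ℂ) := by
    rw [hsmulR t M, hsmulR t P, hP, smul_add, smul_smul, add_assoc, ← add_smul]
    have hz : ((t:ℂ) * ((c - d₁ : ℝ):ℂ) + ((-(t*(c - d₁)) : ℝ) : ℂ)) = 0 := by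
      push_cast; ring
    rw [hz, zero_smul, add_zero]
  set w : ℂ := ((-(t*(c - d₁)) : ℝ) : ℂ) with hw
  have hcomm : Commute (t • P) (w • (1 : Matrix (Fin (N+1)) (Fin (N+1)) ℂ)) :=
    ((Commute.one_right (t • P)).smul_right w)
  have hexpscal : NormedSpace.exp (w • (1 : Matrix (Fin (N+1)) (Fin (N+1)) ℂ))
      = Complex.exp w • 1 := by
    have h := NormedSpace.map_exp (algebraMap ℂ (Matrix (Fin (N+1)) (Fin (N+1)) ℂ))
        (continuous_algebraMap ℂ _) w
    rw [← Complex.exp_eq_exp_ℂ] at h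
    simp only [Algebra.algebraMap_eq_smul_one] at h
    exact h.symm
  rw [hdecomp, Matrix.exp_add_of_commute _ _ hcomm, hexpscal, mul_smul_comm, mul_one,
    Matrix.smul_mulVec, norm_smul, norm_smul]
  have h1 : ‖Real.exp (-d₁ * t)‖ = Real.exp (-d₁*t) := Real.norm_of_nonneg (Real.exp_pos _).le
  have h2 : ‖Complex.exp w‖ = Real.exp (-(t*(c - d₁))) := by
    rw [hw]
    simp [Complex.norm_exp]
  have h3 : ‖(NormedSpace.exp (t • P)).mulVec v‖ ≤ Real.exp (t*c) * ‖v‖ := by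
    refine (Matrix.linfty_opNorm_mulVec _ _).trans ?_
    have hn : ‖t • P‖ ≤ t * c := by
      rw [norm_smul, Real.norm_of_nonneg ht]
      exact mul_le_mul_of_nonneg_left hPnorm ht
    exact mul_le_mul_of_nonneg_right
      ((my_norm_exp_le (t • P)).trans (Real.exp_le_exp.mpr hn)) (norm_nonneg v)
  rw [h1, h2]
  calc Real.exp (-d₁*t) * (Real.exp (-(t*(c - d₁))) * ‖(NormedSpace.exp (t • P)).mulVec v‖)
      ≤ Real.exp (-d₁*t) * (Real.exp (-(t*(c - d₁))) * (Real.exp (t*c) * ‖v‖)) := by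
        have := h3
        gcongr
    _ = ‖v‖ := by
        rw [← mul_assoc, ← mul_assoc, ← Real.exp_add, ← Real.exp_add,
          show -d₁*t + -(t*(c - d₁)) + t*c = 0 by ring, Real.exp_zero, one_mul]
end

section
/- Let A, C be continuous on [−h, 1+h] with A + C > 0 everywhere, (A−C)(−h) > 0, and 2N·(A−C)(−h) > |(A+C)'(−h)| where h = 1/(2N). Suppose w : [−h,1+h] → ℂ is C¹ and satisfies the boundary condition (1/(2N))·((A+C)w)'(−h) − ((A−C)w)(−h) = 0. If w(−h) ≠ 0, then w'(−h) = γ · w(−h) with γ = (2N(A−C)(−h) − (A+C)'(−h))/((A+C)(−h)) > 0, and consequently the function z ↦ Re(w(z)·conj(w(−h))) has strictly positive derivative at z = −h, so |w(−h)| < max_{z∈[−h,1+h]}|w(z)| whenever w is non-constant near −h; in particular |w| cannot attain a strict maximum only at −h. -/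
/-- at the left boundary point, the Robin boundary condition of
the Fokker–Planck equation forces `w'(-h) = γ · w(-h)` with `γ > 0`; hence
`z ↦ Re(w(z) · conj(w(-h)))` has strictly positive derivative at `-h`, and
`|w|` cannot attain its maximum over `[-h, 1+h]` only at `-h`. -/
theorem stmt_4 (N h : ℝ) (hN : 0 < N) (hh : h = 1 / (2 * N))
    (A C : ℝ → ℝ) (w w' : ℝ → ℂ) (s₀ : ℝ)
    (hAcont : ContinuousOn A (Set.Icc (-h) (1 + h)))
    (hCcont : ContinuousOn C (Set.Icc (-h) (1 + h)))
    (hACpos : ∀ z ∈ Set.Icc (-h) (1 + h), 0 < A z + C z)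
    (hdrift : 0 < A (-h) - C (-h))
    -- `s₀ = (A+C)'(-h)`
    (hs₀ : HasDerivAt (fun z => A z + C z) s₀ (-h))
    (hN2 : |s₀| < 2 * N * (A (-h) - C (-h)))
    (hw : ∀ z ∈ Set.Icc (-h) (1 + h), HasDerivAt w (w' z) z)
    (hw'cont : ContinuousOn w' (Set.Icc (-h) (1 + h)))
    -- boundary condition `(1/2N)((A+C)w)'(-h) - ((A-C)w)(-h) = 0`
    (hbc : ((1 / (2 * N) : ℝ) : ℂ) *
        ((s₀ : ℂ) * w (-h) + ((A (-h) + C (-h) : ℝ) : ℂ) * w' (-h))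
        - ((A (-h) - C (-h) : ℝ) : ℂ) * w (-h) = 0)
    (hw0 : w (-h) ≠ 0) :
    w' (-h) = (((2 * N * (A (-h) - C (-h)) - s₀) / (A (-h) + C (-h)) : ℝ) : ℂ)
        * w (-h) ∧
    0 < (2 * N * (A (-h) - C (-h)) - s₀) / (A (-h) + C (-h)) ∧
    HasDerivAt (fun z => (w z * (starRingEnd ℂ) (w (-h))).re)
      ((2 * N * (A (-h) - C (-h)) - s₀) / (A (-h) + C (-h))
        * ‖w (-h)‖ ^ 2) (-h) ∧
    ∃ z ∈ Set.Icc (-h) (1 + h), ‖w (-h)‖ < ‖w z‖ := by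
  have hhpos : 0 < h := by rw [hh]; positivity
  have hlr : -h < 1 + h := by linarith
  have hmem : (-h) ∈ Set.Icc (-h) (1 + h) := ⟨le_refl _, by linarith⟩
  set a := A (-h) + C (-h) with ha
  set d := A (-h) - C (-h) with hd
  have hapos : 0 < a := hACpos _ hmem
  have hnum : 0 < 2 * N * d - s₀ := by
    have := abs_lt.mp hN2
    linarith [this.1, this.2]
  set γ : ℝ := (2 * N * d - s₀) / a with hγ
  have hγpos : 0 < γ := div_pos hnum hapos
  -- first conjunct
  have hNC : ((2 * N : ℝ) : ℂ) ≠ 0 := by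
    norm_cast; positivity
  have haC : ((a : ℝ) : ℂ) ≠ 0 := by norm_cast; exact ne_of_gt hapos
  have hNne : (N : ℂ) ≠ 0 := by exact_mod_cast hN.ne'
  have key : (a : ℂ) * w' (-h) = ((2 * N * d - s₀ : ℝ) : ℂ) * w (-h) := by
    have h2 := hbc
    push_cast at h2
    field_simp at h2
    push_cast
    linear_combination h2
  have h1 : w' (-h) = ((γ : ℝ) : ℂ) * w (-h) := by
    rw [hγ]
    push_cast
    rw [div_mul_eq_mul_div, eq_div_iff haC]
    push_cast at key
    linear_combination key
  refine ⟨h1, hγpos, ?_, ?_⟩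
  case _ =>
    have hdw : HasDerivAt w (w' (-h)) (-h) := hw _ hmem
    have hdm : HasDerivAt (fun z => w z * (starRingEnd ℂ) (w (-h)))
        (w' (-h) * (starRingEnd ℂ) (w (-h))) (-h) := hdw.mul_const _
    have hre : HasDerivAt (fun z => (w z * (starRingEnd ℂ) (w (-h))).re)
        ((w' (-h) * (starRingEnd ℂ) (w (-h))).re) (-h) :=
      (Complex.reCLM.hasFDerivAt.comp_hasDerivAt _ hdm)
    convert hre using 1
    rw [h1, mul_assoc, Complex.mul_conj, ← Complex.sq_norm,
      ← Complex.ofReal_mul, Complex.ofReal_re]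
  case _ =>
    -- use positive derivative of f := Re(w z * conj (w(-h))) at -h
    have hdw : HasDerivAt w (w' (-h)) (-h) := hw _ hmem
    have hdm : HasDerivAt (fun z => w z * (starRingEnd ℂ) (w (-h)))
        (w' (-h) * (starRingEnd ℂ) (w (-h))) (-h) := hdw.mul_const _
    have hre : HasDerivAt (fun z => (w z * (starRingEnd ℂ) (w (-h))).re)
        ((w' (-h) * (starRingEnd ℂ) (w (-h))).re) (-h) :=
      (Complex.reCLM.hasFDerivAt.comp_hasDerivAt _ hdm)
    set c := w (-h)
    set f : ℝ → ℝ := fun z => (w z * (starRingEnd ℂ) c).re with hf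
    have hval : (w' (-h) * (starRingEnd ℂ) c).re = γ * ‖c‖ ^ 2 := by
      rw [h1, mul_assoc, Complex.mul_conj, ← Complex.sq_norm,
        ← Complex.ofReal_mul, Complex.ofReal_re]
    have hder : HasDerivAt f (γ * ‖c‖ ^ 2) (-h) := hval ▸ hre
    have hcpos : 0 < ‖c‖ := by
      simpa using hw0
    have hfpos : 0 < γ * ‖c‖ ^ 2 := by positivity
    -- slope tends to the derivative
    have hslope := hder.hasDerivWithinAt (s := Set.Ioi (-h))
    rw [hasDerivWithinAt_iff_tendsto_slope] at hslope
    have hne : Set.Ioi (-h) \ {(-h)} = Set.Ioi (-h) := by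
      ext x; simp [Set.mem_diff]
    rw [hne] at hslope
    have hev : ∀ᶠ y in nhdsWithin (-h) (Set.Ioi (-h)), 0 < slope f (-h) y :=
      hslope.eventually (eventually_gt_nhds hfpos)
    have hioc : Set.Ioc (-h) (1 + h) ∈ nhdsWithin (-h) (Set.Ioi (-h)) :=
      Ioc_mem_nhdsGT_of_mem ⟨le_refl _, hlr⟩
    obtain ⟨y, hy1, hy2⟩ := (hev.and (Filter.eventually_of_mem hioc (fun _ h => h))).exists
    have hylt : -h < y := hy2.1
    have hfy : f (-h) < f y := by
      have hs := hy1
      rw [slope_def_field] at hs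
      have hpos : 0 < y - (-h) := by linarith
      have h3 := mul_pos hs hpos
      rw [div_mul_cancel₀ _ (ne_of_gt hpos)] at h3
      linarith
    refine ⟨y, ⟨le_of_lt hylt, hy2.2⟩, ?_⟩
    have hfh : f (-h) = ‖c‖ ^ 2 := by
      simp only [hf]
      rw [Complex.mul_conj, ← Complex.sq_norm, Complex.ofReal_re]
    have hle : f y ≤ ‖w y‖ * ‖c‖ := by
      calc f y ≤ ‖w y * (starRingEnd ℂ) c‖ := Complex.re_le_norm _
        _ = ‖w y‖ * ‖c‖ := by simp [map_mul]
    have : ‖c‖ ^ 2 < ‖w y‖ * ‖c‖ := by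
      rw [← hfh]; exact lt_of_lt_of_le hfy hle
    nlinarith [hcpos]
end
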